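/- Let A ∈ 𝐔_m be an extreme point of 𝐔_m. If every entry of A is either 0 or 1/2 and every diagonal entry is 0 (i.e., A ∈ 𝐔_m^{(0,1/2)}), then A is the zero matrix. -/
import Mathlib


open Matrix Finset

def IsInU {m : ℕ} (A : Matrix (Fin m) (Fin m) ℝ) : Prop :=
  A.IsSymm ∧ (∀ i j, 0 ≤ A i j) ∧
    ∀ α : Finset (Fin m), ∑ i ∈ α, ∑ j ∈ α, A i j ≤ (α.card : ℝ)

def IsInUtop {m : ℕ} (A : Matrix (Fin m) (Fin m) ℝ) : Prop :=
  IsInU A ∧ ∑ i, ∑ j, A i j = (m : ℝ)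

def IsExtremeIn {m : ℕ} (S : Matrix (Fin m) (Fin m) ℝ → Prop)
    (A : Matrix (Fin m) (Fin m) ℝ) : Prop :=
  S A ∧ ∀ A₁ A₂, S A₁ → S A₂ → A₁ + A₂ = (2 : ℝ) • A → A₁ = A ∧ A₂ = A

def IsRowStochastic {m : ℕ} (X : Matrix (Fin m) (Fin m) ℝ) : Prop :=
  (∀ i j, 0 ≤ X i j) ∧ ∀ i, ∑ j, X i j = 1

def IsSubstochastic {m : ℕ} (X : Matrix (Fin m) (Fin m) ℝ) : Prop :=
  (∀ i j, 0 ≤ X i j) ∧ ∀ i, ∑ j, X i j ≤ 1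

namespace Stmt11Aux
variable {m : ℕ}

noncomputable def Ssum (A : Matrix (Fin m) (Fin m) ℝ) (β : Finset (Fin m)) : ℝ :=
  ∑ i ∈ β, ∑ j ∈ β, A i j

lemma sum_ite_pair (β : Finset (Fin m)) (a b : Fin m) (c : ℝ) :
    ∑ i ∈ β, ∑ j ∈ β, (if i = a ∧ j = b then c else 0) = if a ∈ β ∧ b ∈ β then c else 0 := by
  have h1 : ∀ i j : Fin m, (if i = a ∧ j = b then c else 0)
      = (if j = b then (if i = a then c else 0) else 0) := by
    intro i j; split_ifs <;> simp_all
  simp_rw [h1, Finset.sum_ite_eq' β b]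
  by_cases hb : b ∈ β <;> by_cases ha : a ∈ β <;> simp [ha, hb, Finset.sum_ite_eq' β a]

lemma Ssum_nonneg {A : Matrix (Fin m) (Fin m) ℝ} (h0 : ∀ i j, 0 ≤ A i j) (β : Finset (Fin m)) :
    0 ≤ Ssum A β :=
  Finset.sum_nonneg fun i _ => Finset.sum_nonneg fun j _ => h0 i j

lemma Ssum_eq_univ (A : Matrix (Fin m) (Fin m) ℝ) (β : Finset (Fin m)) :
    Ssum A β = ∑ i, ∑ j, (if i ∈ β then (1:ℝ) else 0) * (if j ∈ β then (1:ℝ) else 0) * A i j := by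
  unfold Ssum
  rw [show ∑ i ∈ β, ∑ j ∈ β, A i j = ∑ i, (if i ∈ β then ∑ j ∈ β, A i j else 0) by
    rw [Finset.sum_ite_mem, Finset.univ_inter]]
  refine Finset.sum_congr rfl fun i _ => ?_
  by_cases hi : i ∈ β
  · simp only [hi, if_true]
    rw [show (∑ j ∈ β, A i j) = ∑ j, (if j ∈ β then A i j else 0) by
      rw [Finset.sum_ite_mem, Finset.univ_inter]]
    refine Finset.sum_congr rfl fun j _ => ?_
    by_cases hj : j ∈ β <;> simp [hi, hj]
  · simp [hi]

lemma supermodular {A : Matrix (Fin m) (Fin m) ℝ} (h0 : ∀ i j, 0 ≤ A i j)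
    (β γ : Finset (Fin m)) :
    Ssum A β + Ssum A γ ≤ Ssum A (β ∪ γ) + Ssum A (β ∩ γ) := by
  simp only [Ssum_eq_univ, ← Finset.sum_add_distrib]
  refine Finset.sum_le_sum fun i _ => Finset.sum_le_sum fun j _ => ?_
  have := h0 i j
  by_cases hib : i ∈ β <;> by_cases hjb : j ∈ β <;> by_cases hig : i ∈ γ <;>
    by_cases hjg : j ∈ γ <;>
    simp [hib, hjb, hig, hjg, Finset.mem_union, Finset.mem_inter] <;> linarith

lemma tight_inter {A : Matrix (Fin m) (Fin m) ℝ} (h0 : ∀ i j, 0 ≤ A i j)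
    (hcons : ∀ β : Finset (Fin m), Ssum A β ≤ (β.card : ℝ)) (β γ : Finset (Fin m))
    (hβ : Ssum A β = (β.card : ℝ)) (hγ : Ssum A γ = (γ.card : ℝ)) :
    Ssum A (β ∩ γ) = ((β ∩ γ).card : ℝ) := by
  have hsup := supermodular h0 β γ
  have hU := hcons (β ∪ γ)
  have hI := hcons (β ∩ γ)
  have hcard : ((β ∪ γ).card : ℝ) + ((β ∩ γ).card : ℝ) = (β.card : ℝ) + (γ.card : ℝ) := by
    exact_mod_cast congrArg (fun n : ℕ => (n : ℝ)) (Finset.card_union_add_card_inter β γ)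
  linarith

lemma Ssum_erase {A : Matrix (Fin m) (Fin m) ℝ} (hsymm : A.IsSymm) {u : Fin m}
    {β : Finset (Fin m)} (hu : u ∈ β) (hd : A u u = 0) :
    Ssum A (β.erase u) = Ssum A β - 2 * ∑ j ∈ β, A u j := by
  have hsym' : ∀ i j, A j i = A i j := fun i j => hsymm.apply i j
  have e1 : ∑ i ∈ β, ∑ j ∈ β, A i j
      = (∑ j ∈ β, A u j) + ∑ i ∈ β.erase u, ∑ j ∈ β, A i j :=
    (Finset.add_sum_erase _ _ hu).symm
  have e2 : ∑ i ∈ β.erase u, ∑ j ∈ β, A i j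
      = ∑ i ∈ β.erase u, (A i u + ∑ j ∈ β.erase u, A i j) :=
    Finset.sum_congr rfl fun i _ => (Finset.add_sum_erase _ _ hu).symm
  have e3 : ∑ i ∈ β.erase u, (A i u + ∑ j ∈ β.erase u, A i j)
      = (∑ i ∈ β.erase u, A i u) + ∑ i ∈ β.erase u, ∑ j ∈ β.erase u, A i j :=
    Finset.sum_add_distrib
  have e4 : ∑ i ∈ β.erase u, A i u = ∑ i ∈ β, A i u :=
    Finset.sum_erase _ hd
  have e5 : ∑ i ∈ β, A i u = ∑ j ∈ β, A u j :=
    Finset.sum_congr rfl fun i _ => hsym' u i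
  unfold Ssum
  linarith [e1, e2, e3, e4, e5]

end Stmt11Aux

open Stmt11Aux in
theorem stmt_11 {m : ℕ} (A : Matrix (Fin m) (Fin m) ℝ)
    (hA : IsExtremeIn IsInU A)
    (hdiag : ∀ i, A i i = 0) (hval : ∀ i j, A i j = 0 ∨ A i j = 1/2) :
    A = 0 := by
  classical
  by_contra hA0
  obtain ⟨⟨hsymm, hpos, hcons⟩, hext⟩ := hA
  have hcons' : ∀ β : Finset (Fin m), Ssum A β ≤ (β.card : ℝ) := hcons
  have hent : ∃ i j, A i j ≠ 0 := by
    by_contra h; push_neg at h; exact hA0 (by ext i j; simpa using h i j)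
  obtain ⟨i0, j0, hij0⟩ := hent
  by_cases hT : ∃ β : Finset (Fin m), β.Nonempty ∧ Ssum A β = (β.card : ℝ)
  ·
    -- Case 2: there is a nonempty tight set
    obtain ⟨βT, hβTne, hβTtight⟩ := hT
    obtain ⟨α, hαmemfil, hαmin⟩ := Finset.exists_min_image
      ((univ : Finset (Finset (Fin m))).filter
        (fun β => β.Nonempty ∧ Ssum A β = (β.card : ℝ)))
      (fun β => β.card) ⟨βT, Finset.mem_filter.2 ⟨Finset.mem_univ _, hβTne, hβTtight⟩⟩
    have hαne : α.Nonempty := (Finset.mem_filter.1 hαmemfil).2.1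
    have hαtight : Ssum A α = (α.card : ℝ) := (Finset.mem_filter.1 hαmemfil).2.2
    have hαminimal : ∀ γ : Finset (Fin m), γ.Nonempty → Ssum A γ = (γ.card : ℝ) →
        α.card ≤ γ.card := by
      intro γ h1 h2; exact hαmin γ (Finset.mem_filter.2 ⟨Finset.mem_univ _, h1, h2⟩)
    have hsym' : ∀ i j, A j i = A i j := fun i j => hsymm.apply i j
    have hα2 : 2 ≤ α.card := by
      rcases Nat.lt_or_ge α.card 2 with h | h
      · exfalso
        have h1 : α.card = 1 := by
          have := Finset.card_pos.2 hαne; omega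
        obtain ⟨x, rfl⟩ := Finset.card_eq_one.1 h1
        simp [Ssum, hdiag] at hαtight
      · exact h
    have hrow : ∀ u ∈ α, ∑ j ∈ α, A u j
        = ((α.filter (fun j => A u j ≠ 0)).card : ℝ) / 2 := by
      intro u _
      rw [← Finset.sum_filter_ne_zero]
      rw [Finset.sum_congr rfl (fun j hj => ((hval u j).resolve_left
        (Finset.mem_filter.1 hj).2 : A u j = 1/2))]
      rw [Finset.sum_const, nsmul_eq_mul]
      ring
    have hrge : ∀ u ∈ α, 1 ≤ ∑ j ∈ α, A u j := by
      intro u hu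
      have herase := Ssum_erase hsymm hu (hdiag u)
      have hene : (α.erase u).Nonempty := by
        apply Finset.card_pos.1
        rw [Finset.card_erase_of_mem hu]; omega
      have hnt : Ssum A (α.erase u) ≠ (((α.erase u).card : ℕ) : ℝ) := by
        intro hc
        have := hαminimal _ hene hc
        rw [Finset.card_erase_of_mem hu] at this; omega
      have hlt : Ssum A (α.erase u) < (((α.erase u).card : ℕ) : ℝ) :=
        lt_of_le_of_ne (hcons' _) hnt
      rw [Finset.card_erase_of_mem hu, Nat.cast_sub (by omega)] at hlt
      have hhalf : 1/2 < ∑ j ∈ α, A u j := by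
        rw [herase, hαtight] at hlt; push_cast at hlt ⊢; linarith
      rw [hrow u hu] at hhalf ⊢
      have : (1 : ℝ) < ((α.filter (fun j => A u j ≠ 0)).card : ℝ) := by linarith
      have h2 : 1 < (α.filter (fun j => A u j ≠ 0)).card := by exact_mod_cast this
      have h3 : (2 : ℝ) ≤ ((α.filter (fun j => A u j ≠ 0)).card : ℝ) := by exact_mod_cast h2
      linarith
    have hreq : ∀ u ∈ α, ∑ j ∈ α, A u j = 1 := by
      by_contra h
      push_neg at h
      obtain ⟨u₀, hu₀, hne0⟩ := h
      have hgt : 1 < ∑ j ∈ α, A u₀ j := lt_of_le_of_ne (hrge u₀ hu₀) (Ne.symm hne0)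
      have hsum : ∑ u ∈ α, (1:ℝ) < ∑ u ∈ α, ∑ j ∈ α, A u j :=
        Finset.sum_lt_sum (fun i hi => hrge i hi) ⟨u₀, hu₀, hgt⟩
      rw [Finset.sum_const, nsmul_eq_mul, mul_one] at hsum
      have : Ssum A α = ∑ u ∈ α, ∑ j ∈ α, A u j := rfl
      rw [← this, hαtight] at hsum
      exact lt_irrefl _ hsum
    obtain ⟨u, hu⟩ := hαne
    have hN2 : (α.filter (fun j => A u j ≠ 0)).card = 2 := by
      have h1 := hreq u hu
      rw [hrow u hu] at h1
      have : ((α.filter (fun j => A u j ≠ 0)).card : ℝ) = 2 := by linarith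
      exact_mod_cast this
    obtain ⟨v, w, hvw, hNvw⟩ := Finset.card_eq_two.1 hN2
    have hv : v ∈ α ∧ A u v ≠ 0 := by
      have : v ∈ α.filter (fun j => A u j ≠ 0) := by rw [hNvw]; simp
      exact ⟨(Finset.mem_filter.1 this).1, (Finset.mem_filter.1 this).2⟩
    have hw : w ∈ α ∧ A u w ≠ 0 := by
      have : w ∈ α.filter (fun j => A u j ≠ 0) := by rw [hNvw]; simp
      exact ⟨(Finset.mem_filter.1 this).1, (Finset.mem_filter.1 this).2⟩
    have hAuv : A u v = 1/2 := (hval u v).resolve_left hv.2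
    have hAuw : A u w = 1/2 := (hval u w).resolve_left hw.2
    have hAvu : A v u = 1/2 := (hsym' u v).trans hAuv
    have hAwu : A w u = 1/2 := (hsym' u w).trans hAuw
    have huv : u ≠ v := by intro h; rw [← h, hdiag u] at hAuv; norm_num at hAuv
    have huw : u ≠ w := by intro h; rw [← h, hdiag u] at hAuw; norm_num at hAuw
    have hvu : v ≠ u := Ne.symm huv
    have hwu : w ≠ u := Ne.symm huw
    have hwv : w ≠ v := Ne.symm hvw
    -- key: any set containing u and exactly one of v, w is slack
    have key : ∀ β : Finset (Fin m), u ∈ β → ¬(v ∈ β ↔ w ∈ β) →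
        Ssum A β < (β.card : ℝ) := by
      intro β huβ hiff
      refine lt_of_le_of_ne (hcons' β) fun htight => ?_
      have hint := tight_inter hpos hcons' β α htight hαtight
      have hne2 : (β ∩ α).Nonempty := ⟨u, Finset.mem_inter.2 ⟨huβ, hu⟩⟩
      have hlt : (β ∩ α).card < α.card := by
        apply Finset.card_lt_card
        rw [Finset.ssubset_iff_of_subset Finset.inter_subset_right]
        by_cases hvβ : v ∈ β
        · have hwβ : w ∉ β := fun hwb => hiff ⟨fun _ => hwb, fun _ => hvβ⟩
          exact ⟨w, hw.1, fun hmem => hwβ (Finset.mem_inter.1 hmem).1⟩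
        · exact ⟨v, hv.1, fun hmem => hvβ (Finset.mem_inter.1 hmem).1⟩
      exact absurd (hαminimal _ hne2 hint) (by omega)
    -- epsilon
    obtain ⟨β₁, hβ₁B, hβ₁min⟩ := Finset.exists_min_image
      ((univ : Finset (Finset (Fin m))).filter
        (fun β => u ∈ β ∧ ¬(v ∈ β ↔ w ∈ β)))
      (fun β => (β.card : ℝ) - Ssum A β)
      ⟨{u, v}, Finset.mem_filter.2 ⟨Finset.mem_univ _, by simp, by simp [hwu, hwv]⟩⟩
    obtain ⟨-, huβ₁, hiffβ₁⟩ := Finset.mem_filter.1 hβ₁B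
    set ε : ℝ := ((β₁.card : ℝ) - Ssum A β₁) / 2 with hε_def
    have hεpos : 0 < ε := by
      have := key β₁ huβ₁ hiffβ₁; rw [hε_def]; linarith
    have hSuv : Ssum A {u, v} = 1 := by
      simp [Ssum, Finset.sum_pair huv, hdiag, hAuv, hAvu]
      norm_num
    have hεhalf : ε ≤ 1/2 := by
      have h1 := hβ₁min {u, v}
        (Finset.mem_filter.2 ⟨Finset.mem_univ _, by simp, by simp [hwu, hwv]⟩)
      rw [Finset.card_pair huv, hSuv] at h1
      rw [hε_def]; push_cast at h1 ⊢; linarith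
    have hεslack : ∀ β : Finset (Fin m), u ∈ β → ¬(v ∈ β ↔ w ∈ β) →
        Ssum A β + 2 * ε ≤ (β.card : ℝ) := by
      intro β h1 h2
      have := hβ₁min β (Finset.mem_filter.2 ⟨Finset.mem_univ _, h1, h2⟩)
      rw [hε_def]; linarith
    -- perturbation matrix
    set E : Matrix (Fin m) (Fin m) ℝ := fun i j =>
      (if i = u ∧ j = v then ε else 0) + (if i = v ∧ j = u then ε else 0)
      + (if i = u ∧ j = w then -ε else 0) + (if i = w ∧ j = u then -ε else 0) with hE_def
    have e0 : ∀ a b : Fin m, ¬(a = u ∧ b = v) → ¬(a = v ∧ b = u) →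
        ¬(a = u ∧ b = w) → ¬(a = w ∧ b = u) → E a b = 0 := by
      intro a b n1 n2 n3 n4; simp [hE_def, n1, n2, n3, n4]
    have hEuv : E u v = ε := by simp [hE_def, huv, hvu, hvw, hwv, huw, hwu]
    have hEval : ∀ i j, E i j = 0 ∨ (A i j = 1/2 ∧ (E i j = ε ∨ E i j = -ε)) := by
      intro i j
      by_cases h1 : i = u ∧ j = v
      · obtain ⟨rfl, rfl⟩ := h1
        exact Or.inr ⟨hAuv, Or.inl hEuv⟩
      by_cases h2 : i = v ∧ j = u
      · obtain ⟨rfl, rfl⟩ := h2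
        exact Or.inr ⟨hAvu, Or.inl (by simp [hE_def, huv, hvu, hvw, hwv, huw, hwu])⟩
      by_cases h3 : i = u ∧ j = w
      · obtain ⟨rfl, rfl⟩ := h3
        exact Or.inr ⟨hAuw, Or.inr (by simp [hE_def, huv, hvu, hvw, hwv, huw, hwu])⟩
      by_cases h4 : i = w ∧ j = u
      · obtain ⟨rfl, rfl⟩ := h4
        exact Or.inr ⟨hAwu, Or.inr (by simp [hE_def, huv, hvu, hvw, hwv, huw, hwu])⟩
      · exact Or.inl (e0 i j h1 h2 h3 h4)
    have hEsymm : ∀ i j, E j i = E i j := by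
      intro i j
      by_cases h1 : i = u ∧ j = v
      · obtain ⟨rfl, rfl⟩ := h1; simp [hE_def, huv, hvu, hvw, hwv, huw, hwu]
      by_cases h2 : i = v ∧ j = u
      · obtain ⟨rfl, rfl⟩ := h2; simp [hE_def, huv, hvu, hvw, hwv, huw, hwu]
      by_cases h3 : i = u ∧ j = w
      · obtain ⟨rfl, rfl⟩ := h3; simp [hE_def, huv, hvu, hvw, hwv, huw, hwu]
      by_cases h4 : i = w ∧ j = u
      · obtain ⟨rfl, rfl⟩ := h4; simp [hE_def, huv, hvu, hvw, hwv, huw, hwu]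
      · exact (e0 j i (fun h => h2 ⟨h.2, h.1⟩) (fun h => h1 ⟨h.2, h.1⟩)
          (fun h => h4 ⟨h.2, h.1⟩) (fun h => h3 ⟨h.2, h.1⟩)).trans
          (e0 i j h1 h2 h3 h4).symm
    have hSE : ∀ β : Finset (Fin m), ∑ i ∈ β, ∑ j ∈ β, E i j =
        (if u ∈ β ∧ v ∈ β then ε else 0) + (if v ∈ β ∧ u ∈ β then ε else 0)
        + (if u ∈ β ∧ w ∈ β then -ε else 0) + (if w ∈ β ∧ u ∈ β then -ε else 0) := by
      intro β
      simp only [hE_def, Finset.sum_add_distrib, sum_ite_pair]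
    -- both perturbed matrices are in U
    have hmemE : ∀ σ : ℝ, σ = 1 ∨ σ = -1 → IsInU (A + σ • E) := by
      intro σ hσ
      refine ⟨?_, ?_, ?_⟩
      · ext i j
        simp only [Matrix.transpose_apply, Matrix.add_apply, Matrix.smul_apply,
          smul_eq_mul]
        rw [hsym' i j, hEsymm i j]
      · intro i j
        simp only [Matrix.add_apply, Matrix.smul_apply, smul_eq_mul]
        rcases hEval i j with h | ⟨ha, hv2⟩
        · rw [h]; simpa using hpos i j
        · rcases hσ with rfl | rfl <;> rcases hv2 with h | h <;> rw [ha, h] <;> linarith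
      · intro β
        have hsplit : ∑ i ∈ β, ∑ j ∈ β, (A + σ • E) i j
            = Ssum A β + σ * ∑ i ∈ β, ∑ j ∈ β, E i j := by
          simp only [Matrix.add_apply, Matrix.smul_apply, smul_eq_mul, Ssum,
            Finset.sum_add_distrib, Finset.mul_sum]
        rw [hsplit, hSE β]
        by_cases h1 : u ∈ β
        · by_cases h2 : v ∈ β <;> by_cases h3 : w ∈ β
          · simp only [h1, h2, h3, and_self, if_true, true_and, and_true]
            have := hcons' β
            ring_nf
            simpa using this
          · have hsl := hεslack β h1 (by simp [h2, h3])
            have hle := hcons' β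
            simp only [h1, h2, h3, true_and, and_true, if_true, if_false,
              and_false, false_and]
            rcases hσ with rfl | rfl <;> ring_nf <;> linarith
          · have hsl := hεslack β h1 (by simp [h2, h3])
            have hle := hcons' β
            simp only [h1, h2, h3, true_and, and_true, if_true, if_false,
              and_false, false_and]
            rcases hσ with rfl | rfl <;> ring_nf <;> linarith
          · have hle := hcons' β
            simp only [h1, h2, h3, true_and, and_true, if_false, and_false,
              false_and]
            ring_nf
            simpa using hle
        · have hle := hcons' β
          simp only [h1, false_and, and_false, if_false]
          ring_nf
          simpa using hle
    have hsum2 : (A + (1:ℝ) • E) + (A + (-1:ℝ) • E) = (2 : ℝ) • A := by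
      ext i j; simp [Matrix.add_apply]; ring
    have hfin := (hext _ _ (hmemE 1 (Or.inl rfl)) (hmemE (-1) (Or.inr rfl)) hsum2).1
    have h8 := congrFun (congrFun hfin u) v
    simp only [Matrix.add_apply, Matrix.smul_apply, smul_eq_mul, one_mul] at h8
    rw [hEuv] at h8
    linarith
  · -- Case 1: no nonempty tight set; scale
    push_neg at hT
    have hstrict : ∀ β : Finset (Fin m), β.Nonempty → Ssum A β < (β.card : ℝ) :=
      fun β hβ => lt_of_le_of_ne (hcons' β) (hT β hβ)
    obtain ⟨β₀, hβ₀Q, hβ₀min⟩ := Finset.exists_min_image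
      ((univ : Finset (Finset (Fin m))).filter (fun β => β.Nonempty))
      (fun β => (β.card : ℝ) - Ssum A β) ⟨{i0}, by simp⟩
    have hβ₀ne : β₀.Nonempty := (Finset.mem_filter.1 hβ₀Q).2
    set s : ℝ := (β₀.card : ℝ) - Ssum A β₀ with hs_def
    have hs : 0 < s := by have := hstrict β₀ hβ₀ne; simp [hs_def]; linarith
    have hsle : ∀ β : Finset (Fin m), β.Nonempty → s ≤ (β.card : ℝ) - Ssum A β := by
      intro β hβ; exact hβ₀min β (Finset.mem_filter.2 ⟨Finset.mem_univ _, hβ⟩)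
    set t : ℝ := s / (m + 1) with ht_def
    have htpos : 0 < t := div_pos hs (by positivity)
    have hsm : s ≤ (m : ℝ) := by
      have h1 := hsle β₀ hβ₀ne
      have h2 : (β₀.card : ℝ) ≤ (m : ℝ) := by
        exact_mod_cast Finset.card_le_card (Finset.subset_univ β₀) |>.trans (by simp)
      have h3 : 0 ≤ Ssum A β₀ := Ssum_nonneg hpos β₀
      simp only [hs_def]; linarith
    have ht1 : t < 1 := by
      rw [ht_def, div_lt_one (by positivity)]; linarith
    have hmem : ∀ c : ℝ, 0 ≤ c → (∀ β : Finset (Fin m), β.Nonempty →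
        c * Ssum A β ≤ (β.card : ℝ)) → IsInU (c • A) := by
      intro c hc hcb
      refine ⟨?_, fun i j => by simpa using mul_nonneg hc (hpos i j), ?_⟩
      · exact hsymm.smul c
      · intro β
        rcases β.eq_empty_or_nonempty with rfl | hβ
        · simp
        · have : ∑ i ∈ β, ∑ j ∈ β, (c • A) i j = c * Ssum A β := by
            simp [Ssum, Finset.mul_sum]
          rw [this]; exact hcb β hβ
    have hb1 : ∀ β : Finset (Fin m), β.Nonempty → (1 + t) * Ssum A β ≤ (β.card : ℝ) := by
      intro β hβ
      have h1 : Ssum A β ≤ (β.card : ℝ) := hcons' β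
      have h2 : (β.card : ℝ) ≤ (m : ℝ) := by exact_mod_cast Finset.card_le_card (Finset.subset_univ β) |>.trans (by simp)
      have h3 : 0 ≤ Ssum A β := Ssum_nonneg hpos β
      have h4 : s ≤ (β.card : ℝ) - Ssum A β := hsle β hβ
      have h5 : t * Ssum A β ≤ t * (m : ℝ) := by
        apply mul_le_mul_of_nonneg_left (by linarith) htpos.le
      have h6 : t * (m : ℝ) ≤ s := by
        rw [ht_def, div_mul_eq_mul_div, div_le_iff₀ (by positivity : (0:ℝ) < (m:ℝ)+1)]
        nlinarith
      nlinarith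
    have hb2 : ∀ β : Finset (Fin m), β.Nonempty → (1 - t) * Ssum A β ≤ (β.card : ℝ) := by
      intro β hβ
      have h1 : Ssum A β ≤ (β.card : ℝ) := hcons' β
      have h3 : 0 ≤ Ssum A β := Ssum_nonneg hpos β
      nlinarith
    have h1U := hmem (1 + t) (by linarith) hb1
    have h2U := hmem (1 - t) (by linarith) hb2
    have hsum : (1 + t) • A + (1 - t) • A = (2 : ℝ) • A := by
      ext i j; simp [Matrix.add_apply]; ring
    have := (hext _ _ h1U h2U hsum).1
    have h7 := congrFun (congrFun this i0) j0
    have h8 : (1 + t) * A i0 j0 = A i0 j0 := by simpa using h7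
    have h9 : t * A i0 j0 = 0 := by linarith
    rcases mul_eq_zero.1 h9 with h | h
    · linarith
    · exact hij0 h
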